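/- arXiv:math/0205093 — 4 statements merged into one kernel-verified Lean document; each statement's English description precedes it below -/
import Mathlib

section
/- Let (X, ν) be a measure space and g₁,…,g_n : X → [0,∞) measurable with 0 < ∫_X (∏_{i∈C} g_i) dν < ∞ for every nonempty subset C ⊆ {1,…,n}. For a partition p of {1,…,n} and 0 ≤ r ≤ n, let p_r := {C ∩ {1,…,r} : C ∈ p} \ {∅} be the restriction of p to {1,…,r}. For a partition q of {1,…,r} define the weights w₀(q) := ∫_X g_{r+1} dν, w(B,q) := (∫_X g_{r+1}·∏_{i∈B} g_i dν)/(∫_X ∏_{i∈B} g_i dν) for B ∈ q, and l(q) := w₀(q) + Σ_{B∈q} w(B,q); define the transition probability P(p_{r+1}|p_r) to be w(B,p_r)/l(p_r) if p_{r+1} is obtained from p_r by adding r+1 to the block B ∈ p_r, and w₀(p_r)/l(p_r) if p_{r+1} is obtained by adding {r+1} as a new block. Then for every partition p of {1,…,n}, the probability q(p) := ∏_{r=1}^{n−1} P(p_{r+1}|p_r) assigned to p by the sequential seating algorithm satisfies q(p) · (∫_X g₁ dν) · ∏_{r=1}^{n−1} l(p_r) = ∏_{C∈p} ∫_X (∏_{i∈C}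 g_i) dν. -/
open MeasureTheory ENNReal

/-- `partK ν g C = ∫ ∏_{i∈C} gᵢ dν`, the partition-block weight. -/
noncomputable def partK {X : Type*} [MeasurableSpace X] (ν : Measure X) {n : ℕ}
    (g : Fin n → X → NNReal) (C : Finset (Fin n)) : ℝ≥0∞ :=
  ∫⁻ x, ∏ i ∈ C, (g i x : ℝ≥0∞) ∂ν

/-- The parts of the restriction of the partition `p` of `{1,…,n}` to the first `r` elements. -/
def restrictParts {n : ℕ} (p : Finpartition (Finset.univ : Finset (Fin n))) (r : ℕ) :
    Finset (Finset (Fin n)) :=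
  (p.parts.image fun C => C.filter fun j => (j : ℕ) < r).erase ∅

/-- The block (possibly empty) to which customer `r` is attached along the seating path
determined by `p`: the restriction to the first `r` elements of the block of `p` containing
`r`. -/
def seatBlock {n : ℕ} (p : Finpartition (Finset.univ : Finset (Fin n))) (r : Fin n) :
    Finset (Fin n) :=
  (p.part r).filter fun j => (j : ℕ) < (r : ℕ)

/-- The normalizing constant `l(p_r)` of the weighted Chinese restaurant seating rule at the
step where customer `r` enters: `∫ g_r dν + Σ_{B ∈ p_r} (∫ g_r ∏_{i∈B} gᵢ dν)/(∫ ∏_{i∈B} gᵢ dν)`. -/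
noncomputable def seatNorm {X : Type*} [MeasurableSpace X] (ν : Measure X) {n : ℕ}
    (g : Fin n → X → NNReal) (p : Finpartition (Finset.univ : Finset (Fin n)))
    (r : Fin n) : ℝ≥0∞ :=
  partK ν g {r} + ∑ B ∈ restrictParts p (r : ℕ), partK ν g (insert r B) / partK ν g B

/-- The transition probability `P(p_{r+1}|p_r)` of the weighted Chinese restaurant seating rule
along the seating path determined by `p`: customer `r` either starts a new block (weight
`∫ g_r dν`) or joins the existing block `B = seatBlock p r` (weight
`(∫ g_r ∏_{i∈B} gᵢ dν)/(∫ ∏_{i∈B} gᵢ dν)`), normalized by `l(p_r)`. -/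
noncomputable def seatProb {X : Type*} [MeasurableSpace X] (ν : Measure X) {n : ℕ}
    (g : Fin n → X → NNReal) (p : Finpartition (Finset.univ : Finset (Fin n)))
    (r : Fin n) : ℝ≥0∞ :=
  (if seatBlock p r = ∅ then partK ν g {r}
    else partK ν g (insert r (seatBlock p r)) / partK ν g (seatBlock p r)) /
    seatNorm ν g p r

lemma telescope {X : Type*} [MeasurableSpace X] (ν : Measure X) {n : ℕ}
    (g : Fin n → X → NNReal)
    (hK : ∀ C : Finset (Fin n), C.Nonempty → 0 < partK ν g C ∧ partK ν g C < ∞)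
    (C : Finset (Fin n)) (hC : C.Nonempty) :
    ∏ r ∈ C, (if C.filter (fun j : Fin n => (j : ℕ) < (r : ℕ)) = ∅ then partK ν g {r}
      else partK ν g (insert r (C.filter fun j : Fin n => (j : ℕ) < (r : ℕ))) /
        partK ν g (C.filter fun j : Fin n => (j : ℕ) < (r : ℕ)))
      = partK ν g C := by
  induction C using Finset.strongInduction with
  | _ C ih =>
  set m := C.max' hC with hm
  have hmC : m ∈ C := C.max'_mem hC
  have hfm : C.filter (fun j : Fin n => (j : ℕ) < (m : ℕ)) = C.erase m := by
    ext j
    simp only [Finset.mem_filter, Finset.mem_erase]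
    constructor
    · rintro ⟨hj, hlt⟩
      exact ⟨fun h => by simp [h] at hlt, hj⟩
    · rintro ⟨hne, hj⟩
      exact ⟨hj, Fin.lt_def.mp (lt_of_le_of_ne (C.le_max' j hj) hne)⟩
  rw [← Finset.mul_prod_erase C _ hmC]
  by_cases hE : C.erase m = ∅
  · have hCm : C = {m} := by
      have := Finset.insert_erase hmC
      rw [hE] at this
      simp at this; exact this.symm
    rw [hE] at hfm
    simp [hfm, hE, hCm, Finset.filter_singleton]
  · have hEne : (C.erase m).Nonempty := Finset.nonempty_of_ne_empty hE
    have hsub : C.erase m ⊂ C := Finset.erase_ssubset hmC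
    have hprod : ∀ r ∈ C.erase m,
        C.filter (fun j : Fin n => (j : ℕ) < (r : ℕ)) =
        (C.erase m).filter (fun j : Fin n => (j : ℕ) < (r : ℕ)) := by
      intro r hr
      have hrm : (r : ℕ) < (m : ℕ) := Fin.lt_def.mp
        (lt_of_le_of_ne (C.le_max' r (Finset.mem_of_mem_erase hr))
          (Finset.ne_of_mem_erase hr))
      ext j
      simp only [Finset.mem_filter, Finset.mem_erase]
      constructor
      · rintro ⟨hj, hlt⟩
        exact ⟨⟨fun h => by subst h; omega, hj⟩, hlt⟩
      · rintro ⟨⟨_, hj⟩, hlt⟩; exact ⟨hj, hlt⟩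
    have hrest : ∏ r ∈ C.erase m,
        (if C.filter (fun j : Fin n => (j : ℕ) < (r : ℕ)) = ∅ then partK ν g {r}
          else partK ν g (insert r (C.filter fun j : Fin n => (j : ℕ) < (r : ℕ))) /
            partK ν g (C.filter fun j : Fin n => (j : ℕ) < (r : ℕ)))
        = partK ν g (C.erase m) := by
      rw [Finset.prod_congr rfl fun r hr => by rw [hprod r hr]]
      exact ih (C.erase m) hsub hEne
    rw [hrest, hfm, if_neg hE, Finset.insert_erase hmC]
    exact ENNReal.div_mul_cancel (hK _ hEne).1.ne' (hK _ hEne).2.ne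

/-- Lemma 2.3 (weighted Chinese restaurant process): the probability
`q(p) = ∏_{r=1}^{n-1} P(p_{r+1}|p_r)` that the sequential seating algorithm produces the
partition `p` satisfies `q(p) · (∫ g₁ dν) · ∏_{r=1}^{n-1} l(p_r) = ∏_{C∈p} ∫ ∏_{i∈C} gᵢ dν`. -/
theorem weighted_chinese_restaurant
    {X : Type*} [MeasurableSpace X] (ν : Measure X)
    (n : ℕ) (hn : 0 < n) (g : Fin n → X → NNReal) (hg : ∀ i, Measurable (g i))
    (hK : ∀ C : Finset (Fin n), C.Nonempty → 0 < partK ν g C ∧ partK ν g C < ∞)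
    (p : Finpartition (Finset.univ : Finset (Fin n))) :
    (∏ r ∈ Finset.univ.filter fun r : Fin n => (r : ℕ) ≠ 0, seatProb ν g p r) *
        partK ν g {(⟨0, hn⟩ : Fin n)} *
        ∏ r ∈ Finset.univ.filter fun r : Fin n => (r : ℕ) ≠ 0, seatNorm ν g p r
      = ∏ C ∈ p.parts, partK ν g C := by
  set w : Fin n → ℝ≥0∞ := fun r =>
    if seatBlock p r = ∅ then partK ν g {r}
    else partK ν g (insert r (seatBlock p r)) / partK ν g (seatBlock p r) with hw
  -- seatNorm is positive and finite
  have hN : ∀ r : Fin n, seatNorm ν g p r ≠ 0 ∧ seatNorm ν g p r ≠ ∞ := by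
    intro r
    constructor
    · intro h
      rw [seatNorm] at h
      have := (hK {r} ⟨r, Finset.mem_singleton_self r⟩).1
      simp only [add_eq_zero] at h
      exact this.ne' h.1
    · rw [seatNorm]
      refine ENNReal.add_ne_top.mpr ⟨(hK {r} ⟨r, Finset.mem_singleton_self r⟩).2.ne, ?_⟩
      refine (ENNReal.sum_lt_top.mpr fun B hB => ?_).ne
      have hBne : B.Nonempty := by
        rw [restrictParts, Finset.mem_erase] at hB
        exact Finset.nonempty_of_ne_empty hB.1
      exact ENNReal.div_lt_top (hK _ (Finset.insert_nonempty r B)).2.ne (hK _ hBne).1.ne'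
  -- seatProb * seatNorm = w
  have hmul : ∀ r : Fin n, seatProb ν g p r * seatNorm ν g p r = w r := by
    intro r
    rw [seatProb, hw]
    exact ENNReal.div_mul_cancel (hN r).1 (hN r).2
  -- combine the two products
  rw [mul_comm _ (partK ν g {(⟨0, hn⟩ : Fin n)}), mul_assoc, ← Finset.prod_mul_distrib]
  simp_rw [hmul]
  -- w at 0 equals partK {0}
  have hw0 : w ⟨0, hn⟩ = partK ν g {(⟨0, hn⟩ : Fin n)} := by
    have : seatBlock p ⟨0, hn⟩ = ∅ := by
      rw [seatBlock]
      apply Finset.filter_false_of_mem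
      intro j _; simp
    simp [hw, this]
  have hfilter : Finset.univ.filter (fun r : Fin n => (r : ℕ) ≠ 0) =
      Finset.univ.erase ⟨0, hn⟩ := by
    ext r
    simp [Fin.ext_iff]
  rw [← hw0, hfilter, Finset.mul_prod_erase Finset.univ w (Finset.mem_univ _)]
  -- split the product over parts
  have huniv : (Finset.univ : Finset (Fin n)) = p.parts.biUnion id := p.biUnion_parts.symm
  have h2 : ∏ x ∈ p.parts.biUnion id, w x = ∏ C ∈ p.parts, ∏ r ∈ C, w r :=
    Finset.prod_biUnion p.disjoint
  rw [p.biUnion_parts] at h2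
  rw [h2]
  refine Finset.prod_congr rfl fun C hC => ?_
  have hCne := p.nonempty_of_mem_parts hC
  have hwC : ∀ r ∈ C, w r =
      (if C.filter (fun j : Fin n => (j : ℕ) < (r : ℕ)) = ∅ then partK ν g {r}
        else partK ν g (insert r (C.filter fun j : Fin n => (j : ℕ) < (r : ℕ))) /
          partK ν g (C.filter fun j : Fin n => (j : ℕ) < (r : ℕ))) := by
    intro r hr
    have : seatBlock p r = C.filter (fun j : Fin n => (j : ℕ) < (r : ℕ)) := by
      rw [seatBlock, p.part_eq_of_mem hC hr]
    rw [hw]; simp only [this]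
  rw [Finset.prod_congr rfl hwC]
  exact telescope ν g hK C hCne
end

section
/- Let Y and S be standard Borel spaces, η a σ-finite diffuse measure on Y, (ρ(·|y))_{y∈Y} a measurable kernel of measures on S, ν(dy,ds) = η(dy)ρ(ds|y) the associated σ-finite measure on Y×S, h : S → (0,∞) measurable, N a Poisson random measure on Y×S with intensity ν, and μ the random measure on Y defined by μ(B) := ∫_{Y×S} 1_B(y)·h(s) N(dy,ds). Assume the first moment measure exists, i.e. ∫_S h(s) ρ(ds|y) < ∞ for η-a.e. y. Then μ is almost surely discrete: E[ μ({y ∈ Y : μ({y}) = 0}) ] = 0; equivalently, P-almost surely the random measure μ assigns zero mass to the set of points that are not atoms of μ. -/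
/-!
A Poisson random measure takes integer values on sets of finite intensity. Transported to `ℝ`
by a Borel embedding, its restriction to such a set is a.s. a finite measure with integer values
on the half-lines `Iic q`, `q ∈ ℚ`, hence (Dynkin) on all Borel sets. An integer-valued finite
measure without atoms vanishes: it is `< 1`, hence `0`, on small closed balls around each
point. So `N` is a.s. carried by a countable set on every set of finite intensity. The first
moment hypothesis makes the intensity σ-finite on `{h ≠ 0}`, the only region seen by `μ`; hence
`μ` is a.s. carried by a countable set, and such a measure gives no mass to its non-atoms.
-/

open MeasureTheory ProbabilityTheory ENNReal

/-- `N` is a Poisson random measure on `X` with intensity `ν`, on the probability space `(Ω, P)`. -/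
def IsPoissonRM {X Ω : Type*} [MeasurableSpace X] [MeasurableSpace Ω]
    (P : Measure Ω) (ν : Measure X) (N : Ω → Measure X) : Prop :=
  Measurable N ∧
  (∀ A : Set X, MeasurableSet A → ν A < ∞ → ∀ k : ℕ,
      P {ω | N ω A = k} =
        ENNReal.ofReal (Real.exp (-(ν A).toReal)) * (ν A) ^ k / (Nat.factorial k)) ∧
  ∀ (m : ℕ) (A : Fin m → Set X), (∀ i, MeasurableSet (A i)) →
      (Pairwise fun i j => Disjoint (A i) (A j)) →
      iIndepFun (fun i ω => N ω (A i)) P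

/-- The size-biased random measure `μ(B) = ∫ 1_B(y) h(s) m(dy,ds)`. -/
noncomputable def sizeBiased {Y S : Type*} [MeasurableSpace Y] [MeasurableSpace S]
    (h : S → NNReal) (m : Measure (Y × S)) : Measure Y :=
  (m.withDensity fun q => (h q.2 : ℝ≥0∞)).map Prod.fst

open Set Filter Topology Function
open scoped NNReal

namespace MeasureTheory.Measure

variable {α : Type*} [MeasurableSpace α]

lemma apply_mem_range_toENNReal_of_isPiSystem {μ : Measure α} [IsFiniteMeasure μ]
    {C : Set (Set α)} (hgen : ‹MeasurableSpace α› = .generateFrom C) (hC : IsPiSystem C)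
    (huniv : μ univ ∈ range ENat.toENNReal) (hμC : ∀ s ∈ C, μ s ∈ range ENat.toENNReal)
    {s : Set α} (hs : MeasurableSet s) : μ s ∈ range ENat.toENNReal := by
  induction s, hs using MeasurableSpace.induction_on_inter hgen hC with
  | empty => exact ⟨0, by simp⟩
  | basic s hs => exact hμC s hs
  | compl s hs ihs =>
    obtain ⟨a, ha⟩ := huniv
    obtain ⟨b, hb⟩ := ihs
    exact ⟨a - b, by rw [ENat.toENNReal_sub, ha, hb, measure_compl hs (measure_ne_top μ s)]⟩
  | iUnion f hdisj hf ihf =>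
    choose a ha using ihf
    refine ⟨∑' i, a i, ?_⟩
    rw [measure_iUnion hdisj hf]
    exact (ENat.isClosedEmbedding_toENNReal.map_tsum (g := ENat.toENNRealRingHom) a).trans
      (tsum_congr ha)

lemma eq_zero_of_noAtoms_of_apply_mem_range_toENNReal {X : Type*} [MetricSpace X]
    [SecondCountableTopology X] [MeasurableSpace X] [OpensMeasurableSpace X]
    (μ : Measure X) [IsFiniteMeasure μ] (hatom : ∀ x, μ {x} = 0)
    (hμ : ∀ s, MeasurableSet s → μ s ∈ range ENat.toENNReal) : μ = 0 := by
  refine measure_univ_eq_zero.1 (measure_null_of_locally_null univ fun x _ => ?_)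
  have hball : Tendsto (fun r => μ (Metric.closedBall x r)) (𝓝[>] 0) (𝓝 0) := by
    have := tendsto_measure_biInter_gt (μ := μ) (s := Metric.closedBall x) (a := (0 : ℝ))
      (fun r _ => Metric.isClosed_closedBall.nullMeasurableSet)
      (fun _ _ _ hij => Metric.closedBall_subset_closedBall hij) ⟨1, one_pos, measure_ne_top _ _⟩
    rwa [Metric.biInter_gt_closedBall, Metric.closedBall_zero, hatom] at this
  obtain ⟨r, hr, hμr⟩ :=
    ((hball.eventually (gt_mem_nhds one_pos)).and self_mem_nhdsWithin).exists
  obtain ⟨n, hn⟩ := hμ _ Metric.isClosed_closedBall.measurableSet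
  refine ⟨Metric.closedBall x r, mem_nhdsWithin_of_mem_nhds (Metric.closedBall_mem_nhds x hμr), ?_⟩
  rw [← hn] at hr ⊢
  rw [← ENat.toENNReal_one, ENat.toENNReal_lt, Order.lt_one_iff] at hr
  simp [hr]

lemma exists_countable_compl_null_of_apply_mem_range_toENNReal {X : Type*} [MetricSpace X]
    [SecondCountableTopology X] [MeasurableSpace X] [BorelSpace X]
    (μ : Measure X) [IsFiniteMeasure μ]
    (hμ : ∀ s, MeasurableSet s → μ s ∈ range ENat.toENNReal) :
    ∃ T : Set X, T.Countable ∧ μ Tᶜ = 0 := by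
  set T := {x | μ {x} ≠ 0}
  have hT : T.Countable := by
    simpa [T, pos_iff_ne_zero] using countable_meas_pos_of_disjoint_iUnion (μ := μ)
      measurableSet_singleton fun x y hxy => disjoint_singleton.2 hxy
  refine ⟨T, hT, ?_⟩
  suffices μ.restrict Tᶜ = 0 by simpa using congrArg (· univ) this
  refine eq_zero_of_noAtoms_of_apply_mem_range_toENNReal _ (fun x => ?_) fun s hs => ?_
  · by_cases hx : μ {x} = 0
    · exact nonpos_iff_eq_zero.1 (hx ▸ restrict_apply_le _ _)
    · rw [restrict_apply (measurableSet_singleton x), singleton_inter_eq_empty.2 (by simpa [T]),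
        measure_empty]
  · rw [restrict_apply hs]
    exact hμ _ (hs.inter hT.measurableSet.compl)

lemma measure_setOf_measure_singleton_eq_zero [MeasurableSingletonClass α] {μ : Measure α}
    {T : Set α} (hT : T.Countable) (hμT : μ Tᶜ = 0) : μ {x | μ {x} = 0} = 0 := by
  have hcount : ({x | μ {x} = 0} ∩ T).Countable := hT.mono inter_subset_right
  refine measure_mono_null (fun x hx => ?_) (measure_union_null
    ((measure_biUnion_null_iff hcount).2 fun x hx => hx.1) hμT)
  by_cases hxT : x ∈ T
  · exact Or.inl (mem_biUnion ⟨hx, hxT⟩ rfl)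
  · exact Or.inr hxT

lemma sigmaFinite_restrict_setOf_ne_zero {μ : Measure α} {g : α → ℝ≥0} (hg : Measurable g)
    [SigmaFinite (μ.withDensity fun x => (g x : ℝ≥0∞))] :
    SigmaFinite (μ.restrict {x | g x ≠ 0}) := by
  have hU : MeasurableSet {x | g x ≠ 0} := hg (measurableSet_singleton 0).compl
  have hpos : ∀ᵐ x ∂μ.restrict {x | g x ≠ 0}, (g x : ℝ≥0∞) ≠ 0 :=
    ae_restrict_of_forall_mem hU fun x hx => by simpa using hx
  have : SigmaFinite ((μ.restrict {x | g x ≠ 0}).withDensity fun x => (g x : ℝ≥0∞)) := by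
    rw [← restrict_withDensity hU]
    infer_instance
  rw [← withDensity_inv_same hg.coe_nnreal_ennreal hpos (ae_of_all _ fun _ => coe_ne_top)]
  exact SigmaFinite.withDensity_of_ne_top
    ((withDensity_absolutelyContinuous _ _).ae_le (hpos.mono fun x hx => inv_ne_top.2 hx))

lemma map_fst_withDensity_compProd {β : Type*} [MeasurableSpace β] {μ : Measure α} [SFinite μ]
    {κ : Kernel α β} [IsSFiniteKernel κ] {f : α × β → ℝ≥0∞}
    (hf : Measurable f) :
    ((μ ⊗ₘ κ).withDensity f).map Prod.fst = μ.withDensity fun a => ∫⁻ b, f (a, b) ∂κ a := by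
  ext s hs
  rw [map_apply measurable_fst hs, withDensity_apply _ (measurable_fst hs),
    withDensity_apply _ hs, ← prod_univ, setLIntegral_compProd hf hs .univ]
  simp only [restrict_univ]

end MeasureTheory.Measure

lemma ofReal_exp_mul_pow_div_factorial_eq_poissonMeasure {t : ℝ≥0∞} (ht : t ≠ ∞) (k : ℕ) :
    ENNReal.ofReal (Real.exp (-t.toReal)) * t ^ k / (Nat.factorial k) =
      poissonMeasure t.toNNReal {k} := by
  rw [poissonMeasure_singleton, ENNReal.ofReal_div_of_pos (by positivity),
    ENNReal.ofReal_mul (Real.exp_nonneg _), ENNReal.ofReal_pow NNReal.zero_le_coe,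
    coe_toNNReal_eq_toReal, ofReal_toReal ht, ENNReal.ofReal_natCast]

namespace IsPoissonRM

variable {X Ω : Type*} [MeasurableSpace X] [MeasurableSpace Ω] {P : Measure Ω}
  [IsProbabilityMeasure P] {ν : Measure X} {N : Ω → Measure X}

lemma ae_mem_range_natCast (hN : IsPoissonRM P ν N) {A : Set X} (hA : MeasurableSet A)
    (hνA : ν A < ∞) : ∀ᵐ ω ∂P, N ω A ∈ range ((↑) : ℕ → ℝ≥0∞) := by
  have hsets : ∀ k : ℕ, MeasurableSet {ω | N ω A = k} :=
    fun k => (Measure.measurable_coe hA).comp hN.1 (measurableSet_singleton _)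
  have hdisj : Pairwise (Disjoint on fun k : ℕ => {ω | N ω A = k}) := fun i j hij =>
    disjoint_left.2 fun ω hi hj => hij (Nat.cast_injective (hi.symm.trans hj))
  have hrange : {ω | N ω A ∈ range ((↑) : ℕ → ℝ≥0∞)} = ⋃ k : ℕ, {ω | N ω A = k} := by
    ext ω
    simp [eq_comm]
  change {ω | N ω A ∈ range _} ∈ ae P
  rw [hrange, mem_ae_iff_prob_eq_one (.iUnion hsets), measure_iUnion hdisj hsets]
  simp_rw [hN.2.1 A hA hνA, ofReal_exp_mul_pow_div_factorial_eq_poissonMeasure hνA.ne]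
  simpa using Measure.tsum_indicator_apply_singleton (poissonMeasure _) univ .univ

lemma ae_exists_countable_diff_null_of_lt_top [StandardBorelSpace X] (hN : IsPoissonRM P ν N)
    {A : Set X} (hA : MeasurableSet A) (hνA : ν A < ∞) :
    ∀ᵐ ω ∂P, ∃ T : Set X, T.Countable ∧ N ω (A \ T) = 0 := by
  let f := embeddingReal X
  have hf : MeasurableEmbedding f := measurableEmbedding_embeddingReal X
  have hIic : ∀ q : ℚ, MeasurableSet (f ⁻¹' Iic (q : ℝ) ∩ A) :=
    fun q => (hf.measurable measurableSet_Iic).inter hA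
  filter_upwards [hN.ae_mem_range_natCast hA hνA, ae_all_iff.2 fun q =>
    hN.ae_mem_range_natCast (hIic q) ((measure_mono inter_subset_right).trans_lt hνA)]
    with ω ⟨n, hn⟩ hq
  let μ := ((N ω).restrict A).map f
  have hμ : ∀ s, MeasurableSet s → μ s = N ω (f ⁻¹' s ∩ A) := fun s hs => by
    rw [Measure.map_apply hf.measurable hs, Measure.restrict_apply (hf.measurable hs)]
  have : IsFiniteMeasure μ := ⟨by simp [hμ _ .univ, ← hn]⟩
  have hint : ∀ s, MeasurableSet s → μ s ∈ range ENat.toENNReal := by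
    refine fun s hs => μ.apply_mem_range_toENNReal_of_isPiSystem
      Real.borel_eq_generateFrom_Iic_rat Real.isPiSystem_Iic_rat ⟨n, ?_⟩ ?_ hs
    · simp [hμ _ .univ, ← hn]
    · simp only [mem_iUnion, mem_singleton_iff]
      rintro _ ⟨q, rfl⟩
      obtain ⟨k, hk⟩ := hq q
      exact ⟨k, by simp [hμ _ measurableSet_Iic, ← hk]⟩
  obtain ⟨T, hT, hμT⟩ := μ.exists_countable_compl_null_of_apply_mem_range_toENNReal hint
  refine ⟨f ⁻¹' T, hT.preimage hf.injective, ?_⟩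
  rwa [hμ _ hT.measurableSet.compl, preimage_compl, inter_comm, ← sdiff_eq] at hμT

lemma ae_exists_countable_diff_null [StandardBorelSpace X] (hN : IsPoissonRM P ν N)
    {U : Set X} (hU : MeasurableSet U) [SigmaFinite (ν.restrict U)] :
    ∀ᵐ ω ∂P, ∃ T : Set X, T.Countable ∧ N ω (U \ T) = 0 := by
  have hfin : ∀ n, ν (U ∩ spanningSets (ν.restrict U) n) < ∞ := fun n => by
    rw [inter_comm, ← Measure.restrict_apply (measurableSet_spanningSets _ n)]
    exact measure_spanningSets_lt_top _ n
  filter_upwards [ae_all_iff.2 fun n => hN.ae_exists_countable_diff_null_of_lt_top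
    (hU.inter (measurableSet_spanningSets _ n)) (hfin n)] with ω hω
  choose T hT hNT using hω
  refine ⟨⋃ n, T n, countable_iUnion hT, measure_mono_null (fun x ⟨hxU, hxT⟩ => ?_)
    (measure_iUnion_null hNT)⟩
  exact mem_iUnion.2 ⟨_, ⟨hxU, mem_spanningSetsIndex _ x⟩, fun h => hxT (mem_iUnion.2 ⟨_, h⟩)⟩

end IsPoissonRM

lemma sizeBiased_compl_image_fst_eq_zero {Y S : Type*} [MeasurableSpace Y]
    [MeasurableSingletonClass Y] [MeasurableSpace S] {h : S → ℝ≥0} (hh : Measurable h)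
    {m : Measure (Y × S)} {T : Set (Y × S)} (hT : T.Countable)
    (hmT : m ({q | h q.2 ≠ 0} \ T) = 0) : sizeBiased h m (Prod.fst '' T)ᶜ = 0 := by
  rw [sizeBiased, Measure.map_apply measurable_fst (hT.image _).measurableSet.compl,
    withDensity_apply_eq_zero' (by fun_prop)]
  refine measure_mono_null ?_ hmT
  rintro q ⟨hq, hqT⟩
  exact ⟨by simpa using hq, fun hq' => hqT (mem_image_of_mem _ hq')⟩

theorem sizeBiased_as_discrete_general
    {Y S Ω : Type*} [MeasurableSpace Y] [StandardBorelSpace Y]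
    [MeasurableSpace S] [StandardBorelSpace S] [MeasurableSpace Ω]
    (P : Measure Ω) [IsProbabilityMeasure P]
    (η : Measure Y) [SigmaFinite η]
    (ρ : Kernel Y S) [IsSFiniteKernel ρ]
    (h : S → NNReal) (hh : Measurable h)
    (N : Ω → Measure (Y × S)) (hN : IsPoissonRM P (η ⊗ₘ ρ) N)
    (hmom : ∀ᵐ y ∂η, ∫⁻ s, (h s : ℝ≥0∞) ∂(ρ y) < ∞) :
    ∫⁻ ω, sizeBiased h (N ω) {y | sizeBiased h (N ω) {y} = 0} ∂P = 0 := by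
  have : SigmaFinite ((η ⊗ₘ ρ).withDensity fun q => (h q.2 : ℝ≥0∞)) := by
    refine SigmaFinite.of_map _ measurable_fst.aemeasurable ?_
    rw [Measure.map_fst_withDensity_compProd (by fun_prop)]
    exact SigmaFinite.withDensity_of_ne_top (hmom.mono fun y hy => hy.ne)
  have : SigmaFinite ((η ⊗ₘ ρ).restrict {q | h q.2 ≠ 0}) :=
    Measure.sigmaFinite_restrict_setOf_ne_zero (g := fun q : Y × S => h q.2) (by fun_prop)
  have hcarrier := hN.ae_exists_countable_diff_null
    (show MeasurableSet {q : Y × S | h q.2 ≠ 0} from hh.comp measurable_snd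
      (measurableSet_singleton 0).compl)
  refine (lintegral_congr_ae (hcarrier.mono fun ω ⟨T, hT, hNT⟩ => ?_)).trans lintegral_zero
  exact Measure.measure_setOf_measure_singleton_eq_zero (hT.image Prod.fst)
    (sizeBiased_compl_image_fst_eq_zero hh hT hNT)

/-- Proposition 3.3 (almost sure discreteness): if the size-biased random measure
`μ(B) = ∫ 1_B(y)h(s) N(dy,ds)` built from a Poisson process with intensity `η(dy)ρ(ds|y)`
(`η` σ-finite diffuse) has a first moment measure, then `μ` is almost surely discrete:
`E[μ({y : μ({y}) = 0})] = 0`. -/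
theorem sizeBiased_as_discrete
    {Y S Ω : Type*} [MeasurableSpace Y] [StandardBorelSpace Y]
    [MeasurableSpace S] [StandardBorelSpace S] [MeasurableSpace Ω]
    (P : Measure Ω) [IsProbabilityMeasure P]
    (η : Measure Y) [SigmaFinite η] (hdiff : ∀ y : Y, η {y} = 0)
    (ρ : Kernel Y S) [IsSFiniteKernel ρ]
    (h : S → NNReal) (hh : Measurable h) (hpos : ∀ s, 0 < h s)
    (N : Ω → Measure (Y × S)) (hN : IsPoissonRM P (η ⊗ₘ ρ) N)
    (hmom : ∀ᵐ y ∂η, ∫⁻ s, (h s : ℝ≥0∞) ∂(ρ y) < ∞) :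
    ∫⁻ ω, sizeBiased h (N ω) {y | sizeBiased h (N ω) {y} = 0} ∂P = 0 :=
  sizeBiased_as_discrete_general P η ρ h hh N hN hmom
end

section
/- Let N be a Poisson random measure on a standard Borel space X with σ-finite intensity measure ν, let h : X → [0,∞) be measurable, and set T := ∫_X h dN. Assume P(T = 0) = 0 and let θ > 0. Then for every measurable f : X → [0,∞]: E[ exp(−∫_X f dN) · T^{−θ} ] = (1/Γ(θ)) ∫_0^∞ v^{θ−1} exp(−∫_X (1 − e^{−f(x) − v·h(x)}) ν(dx)) dv, as an identity of values in [0,∞] (with the convention T^{−θ} := 0 when T = ∞). -/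
/-!
For `t ∈ (0, ∞]` the Gamma integral gives `t^{-θ} = Γ(θ)⁻¹ ∫₀^∞ v^{θ-1} e^{-vt} dv`; applied to
`t = T` (a.s. nonzero) and combined with Tonelli, the left side becomes
`Γ(θ)⁻¹ ∫₀^∞ v^{θ-1} E[e^{-N(f + v h)}] dv`, and the inner expectation is the Laplace functional
`E[e^{-N(g)}] = exp(-∫ (1 - e^{-g}) dν)` of the Poisson random measure. The latter holds for simple
`g` supported in a set of finite measure, by independence over the fibres of `g` and the Laplace
transform of a Poisson variable, and passes to all measurable `g` by monotone approximation and
an exhaustion of `X` by sets of finite `ν`-measure, since `e^{-·}` is continuous on `[0, ∞]`.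
-/

open MeasureTheory ProbabilityTheory ENNReal

/-- `expNeg x = e^{-x}` for `x ∈ [0,∞]`, with `e^{-∞} = 0`. -/
noncomputable def expNeg (x : ℝ≥0∞) : ℝ≥0∞ :=
  if x = ∞ then 0 else ENNReal.ofReal (Real.exp (-x.toReal))

open Filter Topology
open scoped NNReal

lemma expNeg_coe (x : ℝ≥0) : expNeg x = ENNReal.ofReal (Real.exp (-x)) := by
  simp [expNeg]

lemma expNeg_ofReal {x : ℝ} (hx : 0 ≤ x) :
    expNeg (ENNReal.ofReal x) = ENNReal.ofReal (Real.exp (-x)) := by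
  rw [ENNReal.ofReal, expNeg_coe, Real.coe_toNNReal _ hx]

lemma expNeg_eq_exp_neg (x : ℝ≥0∞) : expNeg x = EReal.exp (-(x : EReal)) := by
  rcases eq_or_ne x ∞ with rfl | hx
  · simp [expNeg]
  · lift x to ℝ≥0 using hx
    rw [expNeg_coe, EReal.coe_nnreal_eq_coe_real, ← EReal.coe_neg, EReal.exp_coe]

@[simp] lemma expNeg_zero : expNeg 0 = 1 := by simp [expNeg]

@[simp] lemma expNeg_top : expNeg ∞ = 0 := by simp [expNeg]

lemma continuous_expNeg : Continuous expNeg := by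
  simp_rw [funext expNeg_eq_exp_neg]
  exact ENNReal.continuous_exp.comp (continuous_neg.comp continuous_coe_ennreal_ereal)

@[fun_prop]
lemma measurable_expNeg : Measurable expNeg := continuous_expNeg.measurable

lemma antitone_expNeg : Antitone expNeg := fun a b hab => by
  simpa [expNeg_eq_exp_neg] using hab

lemma expNeg_le_one (x : ℝ≥0∞) : expNeg x ≤ 1 := by
  simpa using antitone_expNeg (bot_le : ⊥ ≤ x)

lemma expNeg_ne_top (x : ℝ≥0∞) : expNeg x ≠ ∞ :=
  ne_top_of_le_ne_top one_ne_top (expNeg_le_one x)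

lemma expNeg_add (a b : ℝ≥0∞) : expNeg (a + b) = expNeg a * expNeg b := by
  simp only [expNeg_eq_exp_neg, EReal.coe_ennreal_add, ← EReal.exp_add]
  rw [EReal.neg_add (by simp) (by simp), sub_eq_add_neg]

lemma expNeg_sum {ι : Type*} (s : Finset ι) (a : ι → ℝ≥0∞) :
    expNeg (∑ i ∈ s, a i) = ∏ i ∈ s, expNeg (a i) := by
  classical
  induction s using Finset.induction_on with
  | empty => simp
  | insert i s hi ih => rw [Finset.sum_insert hi, Finset.prod_insert hi, expNeg_add, ih]

lemma expNeg_natCast_mul (n : ℕ) (a : ℝ≥0∞) : expNeg (n * a) = expNeg a ^ n := by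
  induction n with
  | zero => simp
  | succ n ih => rw [Nat.cast_succ, add_one_mul, expNeg_add, ih, pow_succ]

section Poisson

open Nat

variable {Ω : Type*} [MeasurableSpace Ω] {P : Measure Ω} [IsProbabilityMeasure P]
  {Y : Ω → ℝ≥0∞} {t : ℝ≥0}

lemma lintegral_comp_eq_tsum_of_poisson (hY : Measurable Y)
    (hY_law : ∀ k : ℕ, P {ω | Y ω = k} = poissonMeasure t {k})
    (g : ℝ≥0∞ → ℝ≥0∞) :
    ∫⁻ ω, g (Y ω) ∂P = ∑' k : ℕ, g k * P {ω | Y ω = k} := by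
  set E : ℕ → Set Ω := fun k => {ω | Y ω = k}
  have hE : ∀ k, MeasurableSet (E k) := fun k => hY (measurableSet_singleton _)
  have hdisj : Pairwise (Function.onFun Disjoint E) := fun i j hij =>
    Set.disjoint_left.2 fun ω hi hj => hij (Nat.cast_injective (hi.symm.trans hj))
  have hmass : P (⋃ k, E k) = 1 := by
    rw [measure_iUnion hdisj hE]
    simp_rw [E, hY_law, poissonMeasure_singleton]
    rw [← ENNReal.ofReal_tsum_of_nonneg (fun k => by positivity)
      (hasSum_one_poissonMeasure t).summable, (hasSum_one_poissonMeasure t).tsum_eq,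
      ENNReal.ofReal_one]
  have hae : ∀ᵐ ω ∂P, ω ∈ ⋃ k, E k :=
    mem_ae_iff.2 ((prob_compl_eq_zero_iff (MeasurableSet.iUnion hE)).2 hmass)
  calc ∫⁻ ω, g (Y ω) ∂P = ∫⁻ ω in ⋃ k, E k, g (Y ω) ∂P := by
        rw [Measure.restrict_eq_self_of_ae_mem hae]
    _ = ∑' k, ∫⁻ ω in E k, g (Y ω) ∂P := lintegral_iUnion hE hdisj _
    _ = ∑' k : ℕ, g k * P (E k) := tsum_congr fun k => by
        rw [setLIntegral_congr_fun (hE k) (fun ω (hω : Y ω = k) => by rw [hω]),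
          setLIntegral_const]

lemma lintegral_expNeg_mul_of_poisson (hY : Measurable Y)
    (hY_law : ∀ k : ℕ, P {ω | Y ω = k} = poissonMeasure t {k})
    (c : ℝ≥0∞) :
    ∫⁻ ω, expNeg (c * Y ω) ∂P = expNeg ((1 - expNeg c) * t) := by
  obtain ⟨q, hq⟩ : ∃ q : ℝ≥0, expNeg c = q := ⟨_, (coe_toNNReal (expNeg_ne_top c)).symm⟩
  have hq1 : q ≤ 1 := by
    have := expNeg_le_one c
    rwa [hq, ← ENNReal.coe_one, ENNReal.coe_le_coe] at this
  have hexp : HasSum (fun k : ℕ => Real.exp (-t) * ((q * t) ^ k / k !))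
      (Real.exp (-t) * Real.exp (q * t)) := by
    have := (NormedSpace.expSeries_div_hasSum_exp ((q * t : ℝ≥0) : ℝ)).mul_left (Real.exp (-t))
    rwa [← Real.exp_eq_exp_ℝ, NNReal.coe_mul] at this
  calc ∫⁻ ω, expNeg (c * Y ω) ∂P = ∑' k : ℕ, expNeg (c * k) * P {ω | Y ω = k} :=
        lintegral_comp_eq_tsum_of_poisson hY hY_law (fun y => expNeg (c * y))
    _ = ∑' k : ℕ, ENNReal.ofReal (Real.exp (-t) * ((q * t) ^ k / k !)) := by
        refine tsum_congr fun k => ?_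
        rw [mul_comm c, expNeg_natCast_mul, hq, hY_law, poissonMeasure_singleton,
          ← ofReal_coe_nnreal, ← ofReal_pow q.coe_nonneg,
          ← ofReal_mul (by positivity)]
        congr 1
        ring
    _ = ENNReal.ofReal (Real.exp (-t) * Real.exp (q * t)) := by
        rw [← ENNReal.ofReal_tsum_of_nonneg (fun k => by positivity) hexp.summable, hexp.tsum_eq]
    _ = expNeg ((1 - expNeg c) * t) := by
        rw [hq, ← ENNReal.coe_one, ← ENNReal.coe_sub, ← ENNReal.coe_mul, expNeg_coe,
          NNReal.coe_mul, NNReal.coe_sub hq1, ← Real.exp_add]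
        congr 2
        push_cast
        ring

end Poisson

section Limits

variable {X Ω : Type*} [MeasurableSpace X] [MeasurableSpace Ω]

lemma Measurable.setLIntegral_measure {N : Ω → Measure X} (hN : Measurable N) {g : X → ℝ≥0∞}
    (hg : Measurable g) {S : Set X} (hS : MeasurableSet S) :
    Measurable fun ω => ∫⁻ x in S, g x ∂N ω := by
  simp_rw [← lintegral_indicator hS]
  exact (Measure.measurable_lintegral (hg.indicator hS)).comp hN

lemma tendsto_setLIntegral_spanningSets (μ ν : Measure X) [SigmaFinite ν] (g : X → ℝ≥0∞) :
    Tendsto (fun n => ∫⁻ x in spanningSets ν n, g x ∂μ) atTop (𝓝 (∫⁻ x, g x ∂μ)) := by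
  have := tendsto_measure_iUnion_atTop (μ := μ.withDensity g) (monotone_spanningSets ν)
  rw [iUnion_spanningSets, withDensity_apply _ MeasurableSet.univ, Measure.restrict_univ] at this
  exact this.congr fun n => withDensity_apply _ (measurableSet_spanningSets ν n)

lemma lintegral_expNeg_eq_of_tendsto {P : Measure Ω} [IsFiniteMeasure P]
    {F : ℕ → Ω → ℝ≥0∞} {F' : Ω → ℝ≥0∞} {G : ℕ → ℝ≥0∞} {G' : ℝ≥0∞}
    (hF : ∀ n, Measurable (F n)) (hFF' : ∀ ω, Tendsto (F · ω) atTop (𝓝 (F' ω)))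
    (hGG' : Tendsto G atTop (𝓝 G')) (hFG : ∀ n, ∫⁻ ω, expNeg (F n ω) ∂P = expNeg (G n)) :
    ∫⁻ ω, expNeg (F' ω) ∂P = expNeg G' := by
  refine tendsto_nhds_unique ?_ ((continuous_expNeg.tendsto G').comp hGG')
  refine (tendsto_lintegral_of_dominated_convergence 1
    (fun n => measurable_expNeg.comp (hF n)) (fun n => ae_of_all _ fun ω => expNeg_le_one _)
    (by simp) (ae_of_all _ fun ω => (continuous_expNeg.tendsto _).comp (hFF' ω))).congr hFG

end Limits

namespace IsPoissonRM

variable {X Ω : Type*} [MeasurableSpace X] [MeasurableSpace Ω]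
  {P : Measure Ω} {ν : Measure X} {N : Ω → Measure X}

lemma measure_setOf_eq_poissonMeasure (hN : IsPoissonRM P ν N) {A : Set X}
    (hA : MeasurableSet A) {t : ℝ≥0} (ht : ν A = t) (k : ℕ) :
    P {ω | N ω A = k} = poissonMeasure t {k} := by
  rw [hN.2.1 A hA (ht ▸ coe_lt_top) k, poissonMeasure_singleton, ht, coe_toReal,
    ← ofReal_coe_nnreal, ← ofReal_pow t.coe_nonneg,
    ← ofReal_mul (by positivity), ← ofReal_natCast, ← ofReal_div_of_pos (by positivity)]

lemma iIndepFun_of_fintype (hN : IsPoissonRM P ν N) {ι : Type*} [Fintype ι] {A : ι → Set X}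
    (hA : ∀ i, MeasurableSet (A i)) (hd : Pairwise (Function.onFun Disjoint A)) :
    iIndepFun (fun i ω => N ω (A i)) P := by
  let e := (Fintype.equivFin ι).symm
  exact (iIndepFun_precomp_of_bijective e.bijective).1
    (hN.2.2 _ (A ∘ e) (fun i => hA _) (hd.comp_of_injective e.injective))

variable [IsProbabilityMeasure P]

lemma lintegral_expNeg_sum (hN : IsPoissonRM P ν N) {ι : Type*} [Fintype ι] (c : ι → ℝ≥0∞)
    {A : ι → Set X} (hA : ∀ i, MeasurableSet (A i)) (hd : Pairwise (Function.onFun Disjoint A))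
    (hfin : ∀ i, ν (A i) ≠ ∞) :
    ∫⁻ ω, expNeg (∑ i, c i * N ω (A i)) ∂P = expNeg (∑ i, (1 - expNeg (c i)) * ν (A i)) := by
  have hmeas : ∀ i, Measurable fun ω => N ω (A i) := fun i =>
    (Measure.measurable_coe (hA i)).comp hN.1
  simp_rw [expNeg_sum]
  have hind : iIndepFun (fun i ω => expNeg (c i * N ω (A i))) P :=
    (hN.iIndepFun_of_fintype hA hd).comp (fun i y => expNeg (c i * y))
      fun i => measurable_expNeg.comp (measurable_const_mul _)
  rw [lintegral_prod_eq_prod_lintegral_of_indepFun _ _ hind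
    fun i => measurable_expNeg.comp ((hmeas i).const_mul _)]
  refine Finset.prod_congr rfl fun i _ => ?_
  lift ν (A i) to ℝ≥0 using hfin i with t ht
  exact lintegral_expNeg_mul_of_poisson (hmeas i)
    (hN.measure_setOf_eq_poissonMeasure (hA i) ht.symm) _

lemma lintegral_expNeg_setLIntegral_simpleFunc (hN : IsPoissonRM P ν N) (ψ : SimpleFunc X ℝ≥0∞)
    {S : Set X} (hS : MeasurableSet S) (hνS : ν S ≠ ∞) :
    ∫⁻ ω, expNeg (∫⁻ x in S, ψ x ∂N ω) ∂P = expNeg (∫⁻ x in S, (1 - expNeg (ψ x)) ∂ν) := by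
  have hfiber : ∀ (μ : Measure X) (F : ℝ≥0∞ → ℝ≥0∞),
      ∫⁻ x in S, F (ψ x) ∂μ = ∑ a : ψ.range, F a * μ (ψ ⁻¹' {(a : ℝ≥0∞)} ∩ S) := by
    intro μ F
    rw [show ∫⁻ x in S, F (ψ x) ∂μ = ∫⁻ x in S, ψ.map F x ∂μ from rfl,
      SimpleFunc.lintegral_eq_lintegral, SimpleFunc.map_lintegral, ← Finset.sum_coe_sort]
    simp_rw [Measure.restrict_apply (ψ.measurableSet_fiber _)]
  rw [hfiber ν fun a => 1 - expNeg a]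
  have hfiber_id : ∀ μ : Measure X,
      ∫⁻ x in S, ψ x ∂μ = ∑ a : ψ.range, (a : ℝ≥0∞) * μ (ψ ⁻¹' {(a : ℝ≥0∞)} ∩ S) :=
    fun μ => hfiber μ id
  simp_rw [hfiber_id]
  refine hN.lintegral_expNeg_sum _ (fun a => (ψ.measurableSet_fiber _).inter hS) ?_
    fun a => ne_top_of_le_ne_top hνS (measure_mono Set.inter_subset_right)
  intro a b hab
  exact ((Set.disjoint_singleton.2 (Subtype.coe_ne_coe.2 hab)).preimage ψ).mono
    Set.inter_subset_left Set.inter_subset_left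

lemma lintegral_expNeg_setLIntegral (hN : IsPoissonRM P ν N) {g : X → ℝ≥0∞} (hg : Measurable g)
    {S : Set X} (hS : MeasurableSet S) (hνS : ν S ≠ ∞) :
    ∫⁻ ω, expNeg (∫⁻ x in S, g x ∂N ω) ∂P = expNeg (∫⁻ x in S, (1 - expNeg (g x)) ∂ν) := by
  set ψ := SimpleFunc.eapprox g
  have hmono : ∀ x, Monotone fun n => ψ n x := fun x _ _ hmn => SimpleFunc.monotone_eapprox g hmn x
  have hsub : Continuous fun y : ℝ≥0∞ => 1 - expNeg y :=
    (ENNReal.continuous_sub_left one_ne_top).comp continuous_expNeg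
  have hN_lim : ∀ ω, Tendsto (fun n => ∫⁻ x in S, ψ n x ∂N ω) atTop (𝓝 (∫⁻ x in S, g x ∂N ω)) :=
    fun ω => lintegral_tendsto_of_tendsto_of_monotone (fun n => (ψ n).measurable.aemeasurable)
      (ae_of_all _ hmono) (ae_of_all _ (SimpleFunc.tendsto_eapprox hg))
  have hν_lim : Tendsto (fun n => ∫⁻ x in S, (1 - expNeg (ψ n x)) ∂ν) atTop
      (𝓝 (∫⁻ x in S, (1 - expNeg (g x)) ∂ν)) :=
    lintegral_tendsto_of_tendsto_of_monotone
      (fun n => (hsub.measurable.comp (ψ n).measurable).aemeasurable)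
      (ae_of_all _ fun x _ _ hmn => tsub_le_tsub_left (antitone_expNeg (hmono x hmn)) 1)
      (ae_of_all _ fun x => (hsub.tendsto _).comp (SimpleFunc.tendsto_eapprox hg x))
  exact lintegral_expNeg_eq_of_tendsto (fun n => hN.1.setLIntegral_measure (ψ n).measurable hS)
    hN_lim hν_lim fun n => hN.lintegral_expNeg_setLIntegral_simpleFunc (ψ n) hS hνS

lemma lintegral_expNeg_lintegral [SigmaFinite ν] (hN : IsPoissonRM P ν N) {g : X → ℝ≥0∞}
    (hg : Measurable g) :
    ∫⁻ ω, expNeg (∫⁻ x, g x ∂N ω) ∂P = expNeg (∫⁻ x, (1 - expNeg (g x)) ∂ν) :=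
  lintegral_expNeg_eq_of_tendsto
    (fun n => hN.1.setLIntegral_measure hg (measurableSet_spanningSets ν n))
    (fun ω => tendsto_setLIntegral_spanningSets (N ω) ν g)
    (tendsto_setLIntegral_spanningSets ν ν _)
    fun n => hN.lintegral_expNeg_setLIntegral hg (measurableSet_spanningSets ν n)
      (measure_spanningSets_lt_top ν n).ne

end IsPoissonRM

lemma rpow_neg_eq_inv_Gamma_mul_lintegral {θ : ℝ} (hθ : 0 < θ) {t : ℝ≥0∞} (ht : t ≠ 0) :
    t ^ (-θ) = (ENNReal.ofReal (Real.Gamma θ))⁻¹ *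
      ∫⁻ v in Set.Ioi (0 : ℝ), ENNReal.ofReal (v ^ (θ - 1)) * expNeg (ENNReal.ofReal v * t) := by
  rcases eq_or_ne t ∞ with rfl | htop
  · rw [ENNReal.top_rpow_of_neg (neg_neg_of_pos hθ), setLIntegral_congr_fun measurableSet_Ioi
      fun v (hv : 0 < v) => by rw [mul_top (ofReal_pos.2 hv).ne', expNeg_top, mul_zero]]
    simp
  lift t to ℝ≥0 using htop
  have hs : 0 < (t : ℝ) := NNReal.coe_pos.2 (pos_iff_ne_zero.2 (by exact_mod_cast ht))
  have hint : ∫ v in Set.Ioi (0 : ℝ), v ^ (θ - 1) * Real.exp (-(t * v))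
      = (1 / t) ^ θ * Real.Gamma θ := Real.integral_rpow_mul_exp_neg_mul_Ioi hθ hs
  have hpt : ∀ v : ℝ, 0 < v → ENNReal.ofReal (v ^ (θ - 1)) * expNeg (ENNReal.ofReal v * t)
      = ENNReal.ofReal (v ^ (θ - 1) * Real.exp (-(t * v))) := fun v hv => by
    rw [← ofReal_coe_nnreal, ← ofReal_mul hv.le, expNeg_ofReal (by positivity), mul_comm v,
      ← ofReal_mul (by positivity)]
  have hΓ : ENNReal.ofReal (Real.Gamma θ) ≠ 0 := (ofReal_pos.2 (Real.Gamma_pos_of_pos hθ)).ne'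
  rw [setLIntegral_congr_fun measurableSet_Ioi hpt, ← ofReal_integral_eq_lintegral_ofReal
      (Integrable.of_integral_ne_zero (by rw [hint]; positivity))
      ((ae_restrict_iff' measurableSet_Ioi).2 (ae_of_all _ fun v (hv : 0 < v) => by positivity)),
    hint, ofReal_mul (by positivity), mul_left_comm, ENNReal.inv_mul_cancel hΓ ofReal_ne_top,
    mul_one,
    ← ofReal_coe_nnreal, ofReal_rpow_of_pos hs, one_div, Real.inv_rpow hs.le,
    Real.rpow_neg hs.le]

theorem tilted_gamma_identity_general
    {X Ω : Type*} [MeasurableSpace X] [MeasurableSpace Ω]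
    (P : Measure Ω) [IsProbabilityMeasure P]
    (ν : Measure X) [SigmaFinite ν]
    (h : X → NNReal) (hh : Measurable h)
    (N : Ω → Measure X) (hN : IsPoissonRM P ν N)
    (hT0 : P {ω | ∫⁻ x, (h x : ℝ≥0∞) ∂(N ω) = 0} = 0)
    (θ : ℝ) (hθ : 0 < θ)
    (f : X → ℝ≥0∞) (hf : Measurable f) :
    ∫⁻ ω, expNeg (∫⁻ x, f x ∂(N ω)) * (∫⁻ x, (h x : ℝ≥0∞) ∂(N ω)) ^ (-θ) ∂P
      = (ENNReal.ofReal (Real.Gamma θ))⁻¹ *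
          ∫⁻ v in Set.Ioi (0 : ℝ),
            ENNReal.ofReal (v ^ (θ - 1)) *
              expNeg (∫⁻ x, (1 - expNeg (f x + ENNReal.ofReal v * (h x : ℝ≥0∞))) ∂ν) := by
  set Nf := fun ω => ∫⁻ x, f x ∂(N ω)
  set T := fun ω => ∫⁻ x, (h x : ℝ≥0∞) ∂(N ω)
  have hhm : Measurable fun x => (h x : ℝ≥0∞) := hh.coe_nnreal_ennreal
  have hNf : Measurable Nf := (Measure.measurable_lintegral hf).comp hN.1
  have hT : Measurable T := (Measure.measurable_lintegral hhm).comp hN.1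
  have hT_ne : ∀ᵐ ω ∂P, T ω ≠ 0 := ae_iff.2 (by simpa using hT0)
  have hΓ : (ENNReal.ofReal (Real.Gamma θ))⁻¹ ≠ ∞ :=
    inv_ne_top.2 (ofReal_pos.2 (Real.Gamma_pos_of_pos hθ)).ne'
  calc ∫⁻ ω, expNeg (Nf ω) * T ω ^ (-θ) ∂P
      = ∫⁻ ω, (ENNReal.ofReal (Real.Gamma θ))⁻¹ * (∫⁻ v in Set.Ioi (0 : ℝ),
          ENNReal.ofReal (v ^ (θ - 1)) * expNeg (Nf ω + ENNReal.ofReal v * T ω)) ∂P := by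
        refine lintegral_congr_ae (hT_ne.mono fun ω hω => ?_)
        simp_rw [rpow_neg_eq_inv_Gamma_mul_lintegral hθ hω, mul_left_comm (expNeg (Nf ω)),
          ← lintegral_const_mul' _ _ (expNeg_ne_top _), expNeg_add, mul_left_comm]
    _ = (ENNReal.ofReal (Real.Gamma θ))⁻¹ * ∫⁻ v in Set.Ioi (0 : ℝ), ∫⁻ ω,
          ENNReal.ofReal (v ^ (θ - 1)) * expNeg (Nf ω + ENNReal.ofReal v * T ω) ∂P := by
        rw [lintegral_const_mul' _ _ hΓ, lintegral_lintegral_swap (by fun_prop)]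
    _ = _ := by
        congr 1
        refine lintegral_congr fun v => ?_
        rw [lintegral_const_mul' _ _ ofReal_ne_top,
          ← hN.lintegral_expNeg_lintegral (g := fun x => f x + ENNReal.ofReal v * h x)
            (hf.add (hhm.const_mul _))]
        simp_rw [Nf, T, lintegral_add_left hf, lintegral_const_mul _ hhm]

/-- Theorem 5.1(i) in Laplace-functional form: for `T = ∫ h dN` with `N` Poisson of σ-finite
intensity `ν`, `P(T = 0) = 0` and `θ > 0`,
`E[e^{-N(f)} T^{-θ}] = (1/Γ(θ)) ∫₀^∞ v^{θ-1} exp(-∫(1-e^{-f(x)-v·h(x)})ν(dx)) dv`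
(in `[0,∞]`, with `∞^{-θ} = 0`). -/
theorem tilted_gamma_identity
    {X Ω : Type*} [MeasurableSpace X] [StandardBorelSpace X] [MeasurableSpace Ω]
    (P : Measure Ω) [IsProbabilityMeasure P]
    (ν : Measure X) [SigmaFinite ν]
    (h : X → NNReal) (hh : Measurable h)
    (N : Ω → Measure X) (hN : IsPoissonRM P ν N)
    (hT0 : P {ω | ∫⁻ x, (h x : ℝ≥0∞) ∂(N ω) = 0} = 0)
    (θ : ℝ) (hθ : 0 < θ)
    (f : X → ℝ≥0∞) (hf : Measurable f) :
    ∫⁻ ω, expNeg (∫⁻ x, f x ∂(N ω)) * (∫⁻ x, (h x : ℝ≥0∞) ∂(N ω)) ^ (-θ) ∂P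
      = (ENNReal.ofReal (Real.Gamma θ))⁻¹ *
          ∫⁻ v in Set.Ioi (0 : ℝ),
            ENNReal.ofReal (v ^ (θ - 1)) *
              expNeg (∫⁻ x, (1 - expNeg (f x + ENNReal.ofReal v * (h x : ℝ≥0∞))) ∂ν) :=
  tilted_gamma_identity_general P ν h hh N hN hT0 θ hθ f hf
end

section
/- For every integer n ≥ 1 and all real numbers α and θ: Σ_p (∏_{j=1}^{|p|−1} (θ + j·α)) · ∏_{C∈p} ∏_{i=1}^{|C|−1} (i − α) = ∏_{i=1}^{n−1} (θ + i), where the sum is over all partitions p of {1,…,n}, |p| denotes the number of blocks of p, |C| the size of a block C, and empty products equal 1. -/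
/-!
Every partition of `insert a s` arises from exactly one partition `P` of `s`, either by putting
`a` into a part `C` of `P`, which multiplies the weight by `#C - α`, or by adding the new part
`{a}`, which (for `s` nonempty) multiplies it by `θ + #P.parts * α`. Since the parts of `P` cover
`s`, these factors add up to `θ + #s`, so each new point multiplies the total weight by `θ + #s`
(the Chinese restaurant construction).
-/

open Finset

theorem Finset.inter_eq_erase_of_subset_insert {ι : Type*} [DecidableEq ι] {s d : Finset ι}
    {a : ι} (hd : d ⊆ insert a s) (ha : a ∉ s) : d ∩ s = d.erase a := by
  ext x
  have := @hd x
  simp only [mem_insert, mem_inter, mem_erase] at this ⊢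
  grind

namespace Finpartition

theorem parts_avoid_of_disjoint {α : Type*} [GeneralizedBooleanAlgebra α] [DecidableEq α]
    {a b : α} (P : Finpartition a) (h : ∀ d ∈ P.parts, d ≠ b → Disjoint d b) :
    (P.avoid b).parts = P.parts.erase b := by
  ext c
  rw [mem_avoid, mem_erase]
  constructor
  · rintro ⟨d, hd, hdb, rfl⟩
    have hne : d ≠ b := by rintro rfl; exact hdb le_rfl
    rw [(h d hd hne).sdiff_eq_left]
    exact ⟨hne, hd⟩
  · rintro ⟨hcb, hc⟩
    have hdisj := h c hc hcb
    exact ⟨c, hc, fun hle => P.ne_bot hc (hdisj.eq_bot_of_le hle), hdisj.sdiff_eq_left⟩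

variable {ι : Type*} [DecidableEq ι] {s : Finset ι} {a : ι}

theorem eq_of_parts_subset {P Q : Finpartition s} (h : P.parts ⊆ Q.parts) : P = Q := by
  ext D
  refine ⟨fun hD => h hD, fun hD => ?_⟩
  obtain ⟨x, hx⟩ := Q.nonempty_of_mem_parts hD
  have hxs : x ∈ s := Q.le hD hx
  rw [Q.eq_of_mem_parts hD (h (P.part_mem.2 hxs)) hx (P.mem_part hxs)]
  exact P.part_mem.2 hxs

theorem mem_restrict_insert_parts (Q : Finpartition (insert a s)) (ha : a ∉ s) {D : Finset ι} :
    D ∈ (Q.restrict (subset_insert a s)).parts ↔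
      D ≠ ∅ ∧ ∃ d ∈ Q.parts, d.erase a = D := by
  simp only [restrict, inf_eq_inter, bot_eq_empty, mem_erase, mem_image]
  refine and_congr_right fun _ => exists_congr fun d => and_congr_right fun hd => ?_
  rw [Finset.inter_eq_erase_of_subset_insert (Q.le hd) ha]

/-- Put `a` into the part `C` of `P`, or into a new singleton part if `C = ∅`; intersecting with
`s` only makes the definition total. -/
def insertInto (P : Finpartition s) (ha : a ∉ s) (C : Finset ι) : Finpartition (insert a s) :=
  (P.avoid C).extend (b := insert a (C ∩ s)) (insert_nonempty _ _).ne_empty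
    (disjoint_insert_right.2 ⟨fun h => ha (mem_sdiff.1 h).1,
      disjoint_sdiff_self_left.mono_right inter_subset_left⟩)
    (by ext; simp only [sup_eq_union, mem_union, mem_sdiff, mem_insert, mem_inter]; tauto)

section insertInto

variable (P : Finpartition s) (ha : a ∉ s) {C : Finset ι}

theorem subset_of_mem_insert_empty_parts (hC : C ∈ insert ∅ P.parts) : C ⊆ s := by
  rcases mem_insert.1 hC with rfl | hC
  exacts [empty_subset s, P.le hC]

theorem parts_insertInto (hC : C ∈ insert ∅ P.parts) :
    (P.insertInto ha C).parts = insert (insert a C) (P.parts.erase C) := by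
  have hdisj : ∀ d ∈ P.parts, d ≠ C → Disjoint d C := fun d hd hdC => by
    rcases mem_insert.1 hC with rfl | hC
    exacts [disjoint_empty_right d, P.disjoint hd hC hdC]
  rw [insertInto, extend_parts, parts_avoid_of_disjoint P hdisj,
    inter_eq_left.2 (P.subset_of_mem_insert_empty_parts hC)]

theorem part_insertInto (hC : C ∈ insert ∅ P.parts) : (P.insertInto ha C).part a = insert a C :=
  part_eq_of_mem _ (by rw [P.parts_insertInto ha hC]; exact mem_insert_self _ _)
    (mem_insert_self a C)

theorem restrict_insertInto (hC : C ∈ insert ∅ P.parts) :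
    (P.insertInto ha C).restrict (subset_insert a s) = P := by
  have hCs := P.subset_of_mem_insert_empty_parts hC
  refine eq_of_parts_subset fun D hD => ?_
  obtain ⟨hD₀, d, hd, rfl⟩ := (mem_restrict_insert_parts _ ha).1 hD
  rw [P.parts_insertInto ha hC] at hd
  rcases mem_insert.1 hd with rfl | hd
  · rw [erase_insert fun h => ha (hCs h)] at hD₀ ⊢
    exact (mem_insert.1 hC).resolve_left hD₀
  · have hd := mem_of_mem_erase hd
    rwa [erase_eq_of_notMem fun h => ha (P.le hd h)]

end insertInto

section restrict

variable (Q : Finpartition (insert a s))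

theorem erase_part_mem_insert_empty_restrict (ha : a ∉ s) :
    (Q.part a).erase a ∈ insert ∅ (Q.restrict (subset_insert a s)).parts := by
  rw [mem_insert, or_iff_not_imp_left, mem_restrict_insert_parts _ ha]
  exact fun hB => ⟨hB, Q.part a, Q.part_mem.2 (mem_insert_self a s), rfl⟩

theorem insertInto_restrict (ha : a ∉ s) :
    (Q.restrict (subset_insert a s)).insertInto ha ((Q.part a).erase a) = Q := by
  have haQ : a ∈ insert a s := mem_insert_self a s
  refine eq_of_parts_subset fun D hD => ?_
  rw [parts_insertInto _ _ (Q.erase_part_mem_insert_empty_restrict ha)] at hD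
  rcases mem_insert.1 hD with rfl | hD
  · rw [insert_erase (Q.mem_part haQ)]
    exact Q.part_mem.2 haQ
  · obtain ⟨hDB, hD⟩ := mem_erase.1 hD
    obtain ⟨-, d, hd, rfl⟩ := (mem_restrict_insert_parts Q ha).1 hD
    by_cases had : a ∈ d
    · rw [Q.part_eq_of_mem hd had] at hDB
      exact absurd rfl hDB
    · rwa [erase_eq_of_notMem had]

end restrict

theorem sum_univ_insert {M : Type*} [AddCommMonoid M] (ha : a ∉ s)
    (f : Finpartition (insert a s) → M) :
    ∑ Q, f Q = ∑ P : Finpartition s, ∑ C ∈ insert ∅ P.parts, f (P.insertInto ha C) := by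
  rw [sum_sigma']
  refine (sum_nbij' (fun x : Σ _ : Finpartition s, Finset ι => x.1.insertInto ha x.2)
    (fun Q => ⟨Q.restrict (subset_insert a s), (Q.part a).erase a⟩) (by simp) ?_ ?_ ?_
    fun _ _ => rfl).symm
  · exact fun Q _ => mem_sigma.2 ⟨mem_univ _, Q.erase_part_mem_insert_empty_restrict ha⟩
  · rintro ⟨P, C⟩ hPC
    have hC := (mem_sigma.1 hPC).2
    have haC : a ∉ C := fun h => ha (P.subset_of_mem_insert_empty_parts hC h)
    simp only [P.restrict_insertInto ha hC, P.part_insertInto ha hC, erase_insert haC]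
  · exact fun Q _ => Q.insertInto_restrict ha

end Finpartition

namespace PitmanYor

variable {R : Type*} [CommRing R] {ι : Type*}

def blockWeight (α : R) (C : Finset ι) : R :=
  ∏ i ∈ range (#C - 1), ((i + 1 : R) - α)

@[simp]
theorem blockWeight_singleton (α : R) (a : ι) : blockWeight α ({a} : Finset ι) = 1 := by
  simp [blockWeight]

variable [DecidableEq ι] {s : Finset ι} {a : ι}

def weight (α θ : R) (P : Finpartition s) : R :=
  (∏ j ∈ range (#P.parts - 1), (θ + (j + 1 : R) * α)) * ∏ C ∈ P.parts, blockWeight α C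

variable (α θ : R)

theorem blockWeight_insert {C : Finset ι} (haC : a ∉ C) (hC : C.Nonempty) :
    blockWeight α (insert a C) = (#C - α) * blockWeight α C := by
  obtain ⟨m, hm⟩ := Nat.exists_eq_add_one.2 hC.card_pos
  rw [blockWeight, blockWeight, card_insert_of_notMem haC, hm, Nat.add_sub_cancel,
    Nat.add_sub_cancel, prod_range_succ, Nat.cast_add_one, mul_comm]

section

variable (P : Finpartition s) (ha : a ∉ s)

theorem weight_insertInto_empty (hs : s.Nonempty) :
    weight α θ (P.insertInto ha ∅) = (θ + #P.parts * α) * weight α θ P := by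
  have ha' : {a} ∉ P.parts := fun h => ha (P.le h (mem_singleton_self a))
  obtain ⟨m, hm⟩ := Nat.exists_eq_add_one.2 (card_pos.2 (P.parts_nonempty hs.ne_empty))
  rw [weight, weight, P.parts_insertInto ha (mem_insert_self _ _), erase_eq_of_notMem
    P.empty_notMem_parts, insert_empty, card_insert_of_notMem ha', prod_insert ha',
    blockWeight_singleton, hm, Nat.add_sub_cancel, Nat.add_sub_cancel, prod_range_succ,
    Nat.cast_add_one]
  ring

theorem weight_insertInto {C : Finset ι} (hC : C ∈ P.parts) :
    weight α θ (P.insertInto ha C) = (#C - α) * weight α θ P := by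
  have haC : a ∉ C := fun h => ha (P.le hC h)
  have hC' : insert a C ∉ P.parts.erase C := fun h =>
    ha (P.le (mem_of_mem_erase h) (mem_insert_self a C))
  rw [weight, weight, P.parts_insertInto ha (mem_insert_of_mem hC), card_insert_of_notMem hC',
    card_erase_add_one hC, prod_insert hC', blockWeight_insert α haC (P.nonempty_of_mem_parts hC),
    ← mul_prod_erase _ _ hC]
  ring

theorem sum_weight_insertInto (hs : s.Nonempty) :
    ∑ C ∈ insert ∅ P.parts, weight α θ (P.insertInto ha C) =
      (θ + #s) * weight α θ P := by
  rw [sum_insert P.empty_notMem_parts, weight_insertInto_empty α θ P ha hs,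
    sum_congr rfl fun C hC => weight_insertInto α θ P ha hC, ← sum_mul, sum_sub_distrib,
    sum_const, nsmul_eq_mul, ← Nat.cast_sum, P.sum_card_parts]
  ring

end

theorem sum_weight_insert (ha : a ∉ s) (hs : s.Nonempty) :
    ∑ Q : Finpartition (insert a s), weight α θ Q =
      (θ + #s) * ∑ P : Finpartition s, weight α θ P := by
  rw [Finpartition.sum_univ_insert ha, mul_sum]
  exact sum_congr rfl fun P _ => sum_weight_insertInto α θ P ha hs

theorem sum_weight_empty : ∑ P : Finpartition (∅ : Finset ι), weight α θ P = 1 := by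
  have : Unique (Finpartition (∅ : Finset ι)) := Finpartition.instUniqueBot
  rw [Fintype.sum_unique, weight, Finpartition.parts_eq_empty_iff.2 rfl]
  simp

theorem sum_weight_singleton : ∑ Q : Finpartition ({a} : Finset ι), weight α θ Q = 1 := by
  rw [← (insert_empty : insert a (∅ : Finset ι) = {a}),
    Finpartition.sum_univ_insert (Finset.notMem_empty a), ← sum_weight_empty (ι := ι) α θ]
  refine sum_congr rfl fun P _ => ?_
  have hP : P.parts = ∅ := Finpartition.parts_eq_empty_iff.2 rfl
  rw [hP, insert_empty, sum_singleton, weight, weight,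
    P.parts_insertInto _ (by rw [hP]; exact mem_singleton_self ∅), hP]
  simp

theorem sum_weight (s : Finset ι) :
    ∑ P : Finpartition s, weight α θ P = ∏ i ∈ range (#s - 1), (θ + (i + 1 : R)) := by
  rcases s.eq_empty_or_nonempty with rfl | hs
  · simpa using sum_weight_empty α θ
  induction hs using Finset.Nonempty.cons_induction with
  | singleton a => simpa using sum_weight_singleton α θ
  | cons a t hat ht ih =>
    obtain ⟨m, hm⟩ := Nat.exists_eq_add_one.2 ht.card_pos
    rw [cons_eq_insert, sum_weight_insert α θ hat ht, ih, card_insert_of_notMem hat, hm,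
      Nat.add_sub_cancel, Nat.add_sub_cancel, prod_range_succ]
    push_cast
    ring

end PitmanYor

theorem pitman_yor_eppf_sum_general (n : ℕ) (α θ : ℝ) :
    ∑ p : Finpartition (Finset.univ : Finset (Fin n)),
        (∏ j ∈ Finset.range (p.parts.card - 1), (θ + (j + 1 : ℝ) * α)) *
          ∏ C ∈ p.parts, ∏ i ∈ Finset.range (C.card - 1), ((i + 1 : ℝ) - α)
      = ∏ i ∈ Finset.range (n - 1), (θ + (i + 1 : ℝ)) := by
  have := PitmanYor.sum_weight α θ (univ : Finset (Fin n))
  rwa [card_fin] at this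

/-- The two-parameter Poisson–Dirichlet EPPF normalization: for every `n ≥ 1` and all reals
`α, θ`, `Σ_p (∏_{j=1}^{|p|-1} (θ+jα)) ∏_{C∈p} ∏_{i=1}^{|C|-1} (i-α) = ∏_{i=1}^{n-1} (θ+i)`,
summing over all partitions `p` of `{1,…,n}`; empty products equal `1`. -/
theorem pitman_yor_eppf_sum (n : ℕ) (hn : 1 ≤ n) (α θ : ℝ) :
    ∑ p : Finpartition (Finset.univ : Finset (Fin n)),
        (∏ j ∈ Finset.range (p.parts.card - 1), (θ + (j + 1 : ℝ) * α)) *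
          ∏ C ∈ p.parts, ∏ i ∈ Finset.range (C.card - 1), ((i + 1 : ℝ) - α)
      = ∏ i ∈ Finset.range (n - 1), (θ + (i + 1 : ℝ)) :=
  pitman_yor_eppf_sum_general n α θ
end
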